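/- Let z = |z'| where z' ∼ N(0, σ²). Then E[z² · erf(z/√2)] = 2σ² arctan(σ)/π + 2σ³/(π(σ²+1)), E[erf(z/√2)] = 2 arctan(σ)/π, E[z · e^{−z²/2}] = 2σ/(√(2π)(σ²+1)), and E[z] = 2σ/√(2π). -/

import Mathlib

/-!
By symmetry of the Gaussian density, every expectation `E[F(z)]` equals
`2 / (√(2π) σ) · ∫₀^∞ F(t) e^{-c t²} dt` with `c = 1 / (2σ²)`. The elementary moments reduce to
`∫₀^∞ t e^{-c t²} dt = 1 / (2c)`. For the erf moments, differentiate
`I(b) = ∫₀^∞ erf(b t) e^{-c t²} dt` under the integral sign: `I'(b) = 1 / (√π (c + b²))` and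
`I(0) = 0`, so `I(b) = arctan(b / √c) / √(cπ)`. The `t²` moment then follows by integrating
`t erf(b t)` by parts against `t e^{-c t²} = (-e^{-c t²} / (2c))'`. Finally `b = 1/√2` gives
`b / √c = σ`.
-/

open MeasureTheory ProbabilityTheory Real

noncomputable def erf (t : ℝ) : ℝ := (2 / Real.sqrt π) * ∫ u in (0:ℝ)..t, Real.exp (-u ^ 2)

open Filter Set Topology
open scoped NNReal

theorem hasDerivAt_erf (t : ℝ) : HasDerivAt erf (2 / √π * exp (-t ^ 2)) t :=
  ((by fun_prop : Continuous fun u : ℝ ↦ exp (-u ^ 2)).integral_hasStrictDerivAt 0 t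
    |>.hasDerivAt.const_mul _)

@[simp] theorem erf_zero : erf 0 = 0 := by simp [erf]

@[fun_prop]
theorem continuous_erf : Continuous erf :=
  continuous_iff_continuousAt.2 fun t ↦ (hasDerivAt_erf t).continuousAt

theorem abs_erf_le (t : ℝ) : |erf t| ≤ 2 / √π * |t| := by
  have h : ‖∫ u in (0:ℝ)..t, exp (-u ^ 2)‖ ≤ 1 * |t - 0| :=
    intervalIntegral.norm_integral_le_of_norm_le_const fun u _ ↦ by
      rw [norm_of_nonneg (exp_pos _).le, exp_le_one_iff]
      nlinarith [sq_nonneg u]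
  rw [one_mul, sub_zero, norm_eq_abs] at h
  rw [erf, abs_mul, abs_of_pos (by positivity : (0:ℝ) < 2 / √π)]
  gcongr

theorem hasDerivAt_self_mul_erf_mul (b x : ℝ) :
    HasDerivAt (fun x ↦ x * erf (b * x))
      (erf (b * x) + 2 * b / √π * (x * exp (-b ^ 2 * x ^ 2))) x := by
  refine ((hasDerivAt_id x).mul ((hasDerivAt_erf (b * x)).comp x
    ((hasDerivAt_id x).const_mul b))).congr_deriv ?_
  simp only [id, one_mul, mul_one, Function.comp, mul_pow, neg_mul]
  ring

section GaussianWeight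

variable {c : ℝ}

theorem integral_Ioi_mul_exp_neg_mul_sq (hc : 0 < c) :
    ∫ x in Ioi (0:ℝ), x * exp (-c * x ^ 2) = (2 * c)⁻¹ := by
  have h := integral_mul_cexp_neg_mul_sq (b := (c : ℂ)) (by simpa using hc)
  rw [← Complex.ofReal_inj, ← integral_complex_ofReal]
  push_cast
  exact h

theorem integrableOn_Ioi_pow_mul_exp_neg_mul_sq (hc : 0 < c) (n : ℕ) :
    IntegrableOn (fun x : ℝ ↦ x ^ n * exp (-c * x ^ 2)) (Ioi 0) := by
  simpa only [rpow_natCast] using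
    integrableOn_rpow_mul_exp_neg_mul_sq hc (s := n) (by linarith [n.cast_nonneg (α := ℝ)])

theorem tendsto_pow_mul_exp_neg_mul_sq_atTop (hc : 0 < c) (n : ℕ) :
    Tendsto (fun x : ℝ ↦ x ^ n * exp (-c * x ^ 2)) atTop (𝓝 0) := by
  refine ((tendsto_rpow_abs_mul_exp_neg_mul_sq_cocompact hc n).mono_left
    atTop_le_cocompact).congr' ?_
  filter_upwards [eventually_ge_atTop 0] with x hx
  rw [abs_of_nonneg hx, rpow_natCast, neg_mul]

theorem norm_pow_mul_erf_mul_exp_le {x : ℝ} (hx : 0 ≤ x) (n : ℕ) (b : ℝ) :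
    ‖x ^ n * erf (b * x) * exp (-c * x ^ 2)‖ ≤ 2 / √π * |b| * (x ^ (n + 1) * exp (-c * x ^ 2)) := by
  have h := abs_erf_le (b * x)
  rw [abs_mul, abs_of_nonneg hx] at h
  rw [norm_mul, norm_mul, norm_of_nonneg (exp_pos _).le,
    norm_of_nonneg (by positivity : 0 ≤ x ^ n)]
  calc x ^ n * ‖erf (b * x)‖ * exp (-c * x ^ 2)
      ≤ x ^ n * (2 / √π * (|b| * x)) * exp (-c * x ^ 2) := by gcongr; exact h
    _ = 2 / √π * |b| * (x ^ (n + 1) * exp (-c * x ^ 2)) := by ring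

theorem integrableOn_Ioi_pow_mul_erf_mul_exp_neg_mul_sq (hc : 0 < c) (n : ℕ) (b : ℝ) :
    IntegrableOn (fun x : ℝ ↦ x ^ n * erf (b * x) * exp (-c * x ^ 2)) (Ioi 0) := by
  refine ((integrableOn_Ioi_pow_mul_exp_neg_mul_sq hc (n + 1)).const_mul (2 / √π * |b|)).mono'
    (by fun_prop) ?_
  filter_upwards [ae_restrict_mem measurableSet_Ioi] with x (hx : 0 < x)
  exact norm_pow_mul_erf_mul_exp_le hx.le n b

theorem tendsto_pow_mul_erf_mul_exp_neg_mul_sq_atTop (hc : 0 < c) (n : ℕ) (b : ℝ) :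
    Tendsto (fun x : ℝ ↦ x ^ n * erf (b * x) * exp (-c * x ^ 2)) atTop (𝓝 0) := by
  refine squeeze_zero_norm' ?_ (by simpa only [mul_zero] using
    (tendsto_pow_mul_exp_neg_mul_sq_atTop hc (n + 1)).const_mul (2 / √π * |b|))
  filter_upwards [eventually_ge_atTop 0] with x hx
  exact norm_pow_mul_erf_mul_exp_le hx n b

theorem hasDerivAt_integral_Ioi_erf_mul_exp_neg_mul_sq (hc : 0 < c) (b₀ : ℝ) :
    HasDerivAt (fun b ↦ ∫ x in Ioi (0:ℝ), erf (b * x) * exp (-c * x ^ 2))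
      (√π * (c + b₀ ^ 2))⁻¹ b₀ := by
  have hF' : ∀ b x, HasDerivAt (fun b ↦ erf (b * x) * exp (-c * x ^ 2))
      (2 / √π * (x * exp (-(c + b ^ 2) * x ^ 2))) b := by
    intro b x
    refine (((hasDerivAt_erf (b * x)).comp b ((hasDerivAt_id b).mul_const x)).mul_const
      (exp (-c * x ^ 2))).congr_deriv ?_
    rw [show -(c + b ^ 2) * x ^ 2 = -(b * x) ^ 2 + -c * x ^ 2 by ring, exp_add]
    ring
  have hbound : ∀ᵐ x ∂volume.restrict (Ioi (0:ℝ)), ∀ b ∈ univ,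
      ‖2 / √π * (x * exp (-(c + b ^ 2) * x ^ 2))‖ ≤ 2 / √π * (x * exp (-c * x ^ 2)) := by
    filter_upwards [ae_restrict_mem measurableSet_Ioi] with x (hx : 0 < x) b _
    rw [norm_of_nonneg (by positivity)]
    gcongr
    nlinarith [sq_nonneg b, sq_nonneg x, mul_nonneg (sq_nonneg b) (sq_nonneg x)]
  have key := hasDerivAt_integral_of_dominated_loc_of_deriv_le univ_mem
    (Eventually.of_forall fun b ↦ (by fun_prop : Continuous _).aestronglyMeasurable)
    (by simpa only [IntegrableOn, pow_zero, one_mul] using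
      integrableOn_Ioi_pow_mul_erf_mul_exp_neg_mul_sq hc 0 b₀)
    (by fun_prop : Continuous _).aestronglyMeasurable hbound
    (by simpa only [pow_one] using
      (integrableOn_Ioi_pow_mul_exp_neg_mul_sq hc 1).const_mul (2 / √π))
    (Eventually.of_forall fun x b _ ↦ hF' b x)
  refine key.2.congr_deriv ?_
  rw [integral_const_mul, integral_Ioi_mul_exp_neg_mul_sq (by positivity)]
  field_simp

theorem integral_Ioi_erf_mul_exp_neg_mul_sq (hc : 0 < c) (b : ℝ) :
    ∫ x in Ioi (0:ℝ), erf (b * x) * exp (-c * x ^ 2) = arctan (b / √c) / (√c * √π) := by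
  have harctan : ∀ b : ℝ, HasDerivAt (fun b ↦ arctan (b / √c) / (√c * √π))
      (√π * (c + b ^ 2))⁻¹ b := fun b ↦ by
    refine (((hasDerivAt_id b).div_const √c).arctan.div_const _).congr_deriv ?_
    have : (√c) ^ 2 = c := sq_sqrt hc.le
    field_simp
    simp [this]
  have hdiff : ∀ b, HasDerivAt (fun b ↦ (∫ x in Ioi (0:ℝ), erf (b * x) * exp (-c * x ^ 2))
      - arctan (b / √c) / (√c * √π)) 0 b := fun b ↦
    sub_self (√π * (c + b ^ 2))⁻¹ ▸
      (hasDerivAt_integral_Ioi_erf_mul_exp_neg_mul_sq hc b).sub (harctan b)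
  have := is_const_of_deriv_eq_zero (fun b ↦ (hdiff b).differentiableAt)
    (fun b ↦ (hdiff b).deriv) b 0
  simpa [sub_eq_zero] using this

theorem integral_Ioi_sq_mul_erf_mul_exp_neg_mul_sq (hc : 0 < c) (b : ℝ) :
    ∫ x in Ioi (0:ℝ), x ^ 2 * erf (b * x) * exp (-c * x ^ 2)
      = (arctan (b / √c) / (√c * √π) + b / (√π * (c + b ^ 2))) / (2 * c) := by
  set u : ℝ → ℝ := fun x ↦ x * erf (b * x)
  set v : ℝ → ℝ := fun x ↦ -(2 * c)⁻¹ * exp (-c * x ^ 2)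
  have hv : ∀ x, HasDerivAt v (x * exp (-c * x ^ 2)) x := by
    intro x
    refine ((((hasDerivAt_pow 2 x).const_mul (-c)).exp).const_mul (-(2 * c)⁻¹)).congr_deriv ?_
    field_simp
    ring
  have h_erf := integrableOn_Ioi_pow_mul_erf_mul_exp_neg_mul_sq hc 0 b
  have h_gauss := integrableOn_Ioi_pow_mul_exp_neg_mul_sq (c := c + b ^ 2) (by positivity) 1
  simp only [pow_zero, one_mul, pow_one] at h_erf h_gauss
  have hu'v : ∀ x, (erf (b * x) + 2 * b / √π * (x * exp (-b ^ 2 * x ^ 2))) * v x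
      = -(2 * c)⁻¹ * (erf (b * x) * exp (-c * x ^ 2))
        + -(2 * c)⁻¹ * (2 * b / √π) * (x * exp (-(c + b ^ 2) * x ^ 2)) := by
    intro x
    rw [show -(c + b ^ 2) * x ^ 2 = -b ^ 2 * x ^ 2 + -c * x ^ 2 by ring, exp_add]
    ring
  have huv_tendsto : Tendsto (u * v) atTop (𝓝 0) := by
    simpa only [mul_zero] using ((tendsto_pow_mul_erf_mul_exp_neg_mul_sq_atTop hc 1 b).const_mul
      (-(2 * c)⁻¹)).congr fun x ↦ by simp only [Pi.mul_apply, u, v]; ring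
  have huv_zero : Tendsto (u * v) (𝓝[>] 0) (𝓝 0) :=
    ((by fun_prop : Continuous (u * v)).tendsto' 0 0 (by simp [u, v])).mono_left
      nhdsWithin_le_nhds
  have h_uv' : IntegrableOn (fun x ↦ u x * (x * exp (-c * x ^ 2))) (Ioi 0) :=
    (integrableOn_Ioi_pow_mul_erf_mul_exp_neg_mul_sq hc 2 b).congr_fun
      (fun x _ ↦ by simp only [u]; ring) measurableSet_Ioi
  have h_u'v : IntegrableOn
      (fun x ↦ (erf (b * x) + 2 * b / √π * (x * exp (-b ^ 2 * x ^ 2))) * v x) (Ioi 0) := by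
    simp_rw [hu'v]
    exact (h_erf.const_mul _).add (h_gauss.const_mul _)
  have ibp := integral_Ioi_mul_deriv_eq_deriv_mul (fun x _ ↦ hasDerivAt_self_mul_erf_mul b x)
    (fun x _ ↦ hv x) h_uv' h_u'v huv_zero huv_tendsto
  simp_rw [hu'v] at ibp
  rw [integral_add (h_erf.const_mul _) (h_gauss.const_mul _), integral_const_mul,
    integral_const_mul, integral_Ioi_erf_mul_exp_neg_mul_sq hc,
    integral_Ioi_mul_exp_neg_mul_sq (by positivity)] at ibp
  calc ∫ x in Ioi (0:ℝ), x ^ 2 * erf (b * x) * exp (-c * x ^ 2)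
      = ∫ x in Ioi (0:ℝ), u x * (x * exp (-c * x ^ 2)) :=
        setIntegral_congr_fun measurableSet_Ioi fun x _ ↦ by simp only [u]; ring
    _ = _ := by
        rw [ibp]
        field_simp
        ring

end GaussianWeight

theorem integral_gaussianReal_comp_abs {v : ℝ≥0} (hv : v ≠ 0) (F : ℝ → ℝ) :
    ∫ x, F |x| ∂gaussianReal 0 v
      = 2 / √(2 * π * v) * ∫ t in Ioi (0:ℝ), F t * exp (-(2 * (v : ℝ))⁻¹ * t ^ 2) := by
  set G : ℝ → ℝ := fun t ↦ (√(2 * π * v))⁻¹ * (F t * exp (-(2 * (v : ℝ))⁻¹ * t ^ 2))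
  calc ∫ x, F |x| ∂gaussianReal 0 v
      = ∫ x, G |x| := by
        rw [integral_gaussianReal_eq_integral_smul hv]
        congr 1 with x
        simp only [G, gaussianPDFReal, smul_eq_mul, sq_abs, sub_zero]
        rw [show -x ^ 2 / (2 * (v : ℝ)) = -(2 * (v : ℝ))⁻¹ * x ^ 2 by ring]
        ring
    _ = 2 * ∫ t in Ioi (0:ℝ), G t := integral_comp_abs
    _ = _ := by
        rw [integral_const_mul]
        ring

theorem integral_gaussianReal_sq_comp_abs {σ : ℝ} (hσ : 0 < σ) (F : ℝ → ℝ) :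
    ∫ x, F |x| ∂gaussianReal 0 ⟨σ ^ 2, sq_nonneg σ⟩
      = 2 / (√(2 * π) * σ) * ∫ t in Ioi (0:ℝ), F t * exp (-(2 * σ ^ 2)⁻¹ * t ^ 2) := by
  have hv : (⟨σ ^ 2, sq_nonneg σ⟩ : ℝ≥0) ≠ 0 := by
    simpa [← NNReal.coe_eq_zero] using hσ.ne'
  rw [integral_gaussianReal_comp_abs hv]
  change 2 / √(2 * π * σ ^ 2) * ∫ t in Ioi (0:ℝ), F t * exp (-(2 * σ ^ 2)⁻¹ * t ^ 2) = _
  rw [sqrt_mul (by positivity), sqrt_sq hσ.le]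

section HalfNormal

variable {σ : ℝ}

theorem integral_abs_gaussianReal (hσ : 0 < σ) :
    ∫ x, |x| ∂gaussianReal 0 ⟨σ ^ 2, sq_nonneg σ⟩ = 2 * σ / √(2 * π) := by
  rw [integral_gaussianReal_sq_comp_abs hσ (fun t ↦ t),
    integral_Ioi_mul_exp_neg_mul_sq (by positivity)]
  field_simp

theorem integral_abs_mul_exp_neg_sq_div_two_gaussianReal (hσ : 0 < σ) :
    ∫ x, |x| * exp (-|x| ^ 2 / 2) ∂gaussianReal 0 ⟨σ ^ 2, sq_nonneg σ⟩
      = 2 * σ / (√(2 * π) * (σ ^ 2 + 1)) := by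
  rw [integral_gaussianReal_sq_comp_abs hσ (fun t ↦ t * exp (-t ^ 2 / 2))]
  have h : ∀ t : ℝ, t * exp (-t ^ 2 / 2) * exp (-(2 * σ ^ 2)⁻¹ * t ^ 2)
      = t * exp (-((2 * σ ^ 2)⁻¹ + 1 / 2) * t ^ 2) := fun t ↦ by
    rw [mul_assoc, ← exp_add]
    ring_nf
  simp_rw [h]
  rw [integral_Ioi_mul_exp_neg_mul_sq (by positivity)]
  field_simp
  ring

theorem sqrt_inv_two_mul_sq (hσ : 0 ≤ σ) : √((2 * σ ^ 2)⁻¹) = (√2 * σ)⁻¹ := by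
  rw [sqrt_inv, sqrt_mul zero_le_two, sqrt_sq hσ]

theorem integral_erf_abs_div_sqrt_two_gaussianReal (hσ : 0 < σ) :
    ∫ x, erf (|x| / √2) ∂gaussianReal 0 ⟨σ ^ 2, sq_nonneg σ⟩ = 2 * arctan σ / π := by
  rw [integral_gaussianReal_sq_comp_abs hσ (fun t ↦ erf (t / √2))]
  simp_rw [div_eq_inv_mul _ √2]
  rw [integral_Ioi_erf_mul_exp_neg_mul_sq (by positivity), sqrt_inv_two_mul_sq hσ.le,
    inv_div_inv, mul_div_cancel_left₀ _ (by positivity), sqrt_mul zero_le_two]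
  field_simp
  exact (sq_sqrt pi_pos.le).symm

theorem integral_sq_abs_mul_erf_abs_div_sqrt_two_gaussianReal (hσ : 0 < σ) :
    ∫ x, |x| ^ 2 * erf (|x| / √2) ∂gaussianReal 0 ⟨σ ^ 2, sq_nonneg σ⟩
      = 2 * σ ^ 2 * arctan σ / π + 2 * σ ^ 3 / (π * (σ ^ 2 + 1)) := by
  rw [integral_gaussianReal_sq_comp_abs hσ (fun t ↦ t ^ 2 * erf (t / √2))]
  simp_rw [div_eq_inv_mul _ √2]
  rw [integral_Ioi_sq_mul_erf_mul_exp_neg_mul_sq (by positivity), sqrt_inv_two_mul_sq hσ.le,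
    inv_div_inv, mul_div_cancel_left₀ _ (by positivity), sqrt_mul zero_le_two, inv_pow]
  have h2 : √2 ^ 2 = 2 := sq_sqrt zero_le_two
  have hπ : √π ^ 2 = π := sq_sqrt pi_pos.le
  rw [h2]
  field_simp
  rw [h2, hπ]
  ring

end HalfNormal

theorem half_normal_moment_identities (σ : ℝ) (hσ : 0 < σ) :
    (∫ x, |x| ^ 2 * erf (|x| / Real.sqrt 2)
        ∂(gaussianReal 0 ⟨σ ^ 2, sq_nonneg σ⟩)
      = 2 * σ ^ 2 * Real.arctan σ / π + 2 * σ ^ 3 / (π * (σ ^ 2 + 1))) ∧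
    (∫ x, erf (|x| / Real.sqrt 2) ∂(gaussianReal 0 ⟨σ ^ 2, sq_nonneg σ⟩)
      = 2 * Real.arctan σ / π) ∧
    (∫ x, |x| * Real.exp (-|x| ^ 2 / 2) ∂(gaussianReal 0 ⟨σ ^ 2, sq_nonneg σ⟩)
      = 2 * σ / (Real.sqrt (2 * π) * (σ ^ 2 + 1))) ∧
    (∫ x, |x| ∂(gaussianReal 0 ⟨σ ^ 2, sq_nonneg σ⟩)
      = 2 * σ / Real.sqrt (2 * π)) :=
  ⟨integral_sq_abs_mul_erf_abs_div_sqrt_two_gaussianReal hσ,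
    integral_erf_abs_div_sqrt_two_gaussianReal hσ,
    integral_abs_mul_exp_neg_sq_div_two_gaussianReal hσ, integral_abs_gaussianReal hσ⟩
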